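/- arXiv:1905.06471 — 2 statements merged into one kernel-verified Lean document; each statement's English description precedes it below -/
import Mathlib

section
/- Let A be a nonempty finite set, σ : A → ℝ any function, and a ∈ A a fixed element. Let D = { x : A → ℝ | x(b) ≥ 0 for all b ∈ A and ∑_{b∈A} x(b) > 0 }. Then the function f : (A → ℝ) → ℝ defined by f(x) = |x(a) − σ(a)·(∑_{b∈A} x(b))| / (∑_{b∈A} x(b)) is quasiconvex on D, i.e., for every r ∈ ℝ the set { x ∈ D | f(x) ≤ r } is convex. -/
theorem stmt_1 (A : Type*) [Fintype A] [Nonempty A] (σ : A → ℝ) (a : A) :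
    QuasiconvexOn ℝ {x : A → ℝ | (∀ b, 0 ≤ x b) ∧ 0 < ∑ b, x b}
      (fun x => |x a - σ a * (∑ b, x b)| / (∑ b, x b)) := by
  intro r
  rintro x ⟨⟨hx0, hxS⟩, hxr⟩ y ⟨⟨hy0, hyS⟩, hyr⟩ s t hs ht hst
  simp only [Set.mem_sep_iff, Set.mem_setOf_eq] at *
  have hSz : (∑ b, (s • x + t • y) b) = s * (∑ b, x b) + t * (∑ b, y b) := by
    simp [Finset.sum_add_distrib, Finset.mul_sum]
  have hSzpos : 0 < ∑ b, (s • x + t • y) b := by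
    rw [hSz]
    rcases eq_or_lt_of_le hs with h | h
    · have ht' : t = 1 := by linarith
      subst ht'; simp [← h]; linarith
    · have h1 : 0 < s * ∑ b, x b := mul_pos h hxS
      have h2 : 0 ≤ t * ∑ b, y b := mul_nonneg ht hyS.le
      linarith
  refine ⟨⟨fun b => by have := hx0 b; have := hy0 b; simp; positivity, hSzpos⟩, ?_⟩
  have hx' : |x a - σ a * ∑ b, x b| ≤ r * ∑ b, x b := by
    rwa [div_le_iff₀ hxS] at hxr
  have hy' : |y a - σ a * ∑ b, y b| ≤ r * ∑ b, y b := by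
    rwa [div_le_iff₀ hyS] at hyr
  rw [div_le_iff₀ hSzpos]
  have key : (s • x + t • y) a - σ a * (∑ b, (s • x + t • y) b)
      = s * (x a - σ a * ∑ b, x b) + t * (y a - σ a * ∑ b, y b) := by
    rw [hSz]; simp; ring
  rw [key, hSz]
  calc |s * (x a - σ a * ∑ b, x b) + t * (y a - σ a * ∑ b, y b)|
      ≤ s * |x a - σ a * ∑ b, x b| + t * |y a - σ a * ∑ b, y b| := by
        refine (abs_add_le _ _).trans ?_
        rw [abs_mul, abs_mul, abs_of_nonneg hs, abs_of_nonneg ht]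
    _ ≤ s * (r * ∑ b, x b) + t * (r * ∑ b, y b) := by
        have := mul_le_mul_of_nonneg_left hx' hs
        have := mul_le_mul_of_nonneg_left hy' ht
        linarith
    _ = r * (s * (∑ b, x b) + t * ∑ b, y b) := by ring
end

section
/- Let A be a nonempty finite set and σ : A → ℝ any function. Let D = { x : A → ℝ | x(b) ≥ 0 for all b ∈ A and ∑_{b∈A} x(b) > 0 }. Then the function F : (A → ℝ) → ℝ defined by F(x) = max_{a∈A} |x(a) − σ(a)·(∑_{b∈A} x(b))| / (∑_{b∈A} x(b)) (the maximum over the finitely many a ∈ A) is quasiconvex on D, i.e., for every r ∈ ℝ the set { x ∈ D | F(x) ≤ r } is convex. -/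
theorem stmt_2 (A : Type*) [Fintype A] [Nonempty A] (σ : A → ℝ) :
    QuasiconvexOn ℝ {x : A → ℝ | (∀ b, 0 ≤ x b) ∧ 0 < ∑ b, x b}
      (fun x => Finset.univ.sup' Finset.univ_nonempty
        (fun a => |x a - σ a * (∑ b, x b)| / (∑ b, x b))) := by
  intro r
  rintro x ⟨⟨hx0, hxS⟩, hxr⟩ y ⟨⟨hy0, hyS⟩, hyr⟩ a b ha hb hab
  simp only [Finset.sup'_le_iff, Finset.mem_univ, true_implies, Set.mem_setOf_eq,
    Set.mem_sep_iff] at hxr hyr ⊢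
  have hzS : (0:ℝ) < ∑ c, (a • x + b • y) c := by
    simp only [Pi.add_apply, Pi.smul_apply, smul_eq_mul, Finset.sum_add_distrib,
      ← Finset.mul_sum]
    rcases eq_or_lt_of_le ha with h | h
    · have hb1 : b = 1 := by linarith
      simpa [← h, hb1] using hyS
    · have : 0 ≤ b * ∑ c, y c := mul_nonneg hb hyS.le
      nlinarith
  refine ⟨⟨fun c => ?_, hzS⟩, fun c => ?_⟩
  · exact add_nonneg (mul_nonneg ha (hx0 c)) (mul_nonneg hb (hy0 c))
  · rw [div_le_iff₀ hzS]
    have hx' : |x c - σ c * ∑ d, x d| ≤ r * ∑ d, x d :=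
      (div_le_iff₀ hxS).mp (hxr c)
    have hy' : |y c - σ c * ∑ d, y d| ≤ r * ∑ d, y d :=
      (div_le_iff₀ hyS).mp (hyr c)
    have hsum : ∑ d, (a • x + b • y) d = a * (∑ d, x d) + b * (∑ d, y d) := by
      simp [Finset.sum_add_distrib, ← Finset.mul_sum]
    have key : (a • x + b • y) c - σ c * ∑ d, (a • x + b • y) d
        = a * (x c - σ c * ∑ d, x d) + b * (y c - σ c * ∑ d, y d) := by
      rw [hsum]
      simp only [Pi.add_apply, Pi.smul_apply, smul_eq_mul]
      ring
    calc |(a • x + b • y) c - σ c * ∑ d, (a • x + b • y) d|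
        ≤ a * |x c - σ c * ∑ d, x d| + b * |y c - σ c * ∑ d, y d| := by
          rw [key]
          exact (abs_add_le _ _).trans (by rw [abs_mul, abs_mul, abs_of_nonneg ha, abs_of_nonneg hb])
      _ ≤ a * (r * ∑ d, x d) + b * (r * ∑ d, y d) :=
          add_le_add (mul_le_mul_of_nonneg_left hx' ha) (mul_le_mul_of_nonneg_left hy' hb)
      _ = r * ∑ d, (a • x + b • y) d := by rw [hsum]; ring
end
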